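/- arXiv:2603.21568 — 2 statements merged into one kernel-verified Lean document; each statement's English description precedes it below -/
import Mathlib

section
/- Let Ψ ∈ ℝ^{M×N} be a matrix and let P ∈ ℝ^{N×M} be a Moore–Penrose pseudoinverse of Ψ, i.e. ΨPΨ = Ψ, PΨP = P, (ΨP)ᵀ = ΨP and (PΨ)ᵀ = PΨ. Let S ⊆ {1,…,M} be a set of indices and suppose the rows of Ψ indexed by S are linearly independent. Then the principal submatrix of ΨP on the index set S (i.e. the matrix ((ΨP)_{i j})_{i,j ∈ S}) is symmetric positive definite. -/
/-!
Write `Q = Ψ * P`. The identities `Ψ P Ψ = Ψ` and `(Ψ P)ᵀ = Ψ P` make `Q` an orthogonal projection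
fixing the columns of `Ψ`, so `Q = Qᵀ Q` and the principal submatrix of `Q` on `S` is the Gram
matrix `Aᵀ A` of the columns `A` of `Q` indexed by `S`. Moreover `Ψᵀ A` is the transpose of the
rows of `Ψ` indexed by `S`, which is injective; hence `A` is injective and `Aᵀ A` is positive
definite.
-/

open Matrix

open scoped ComplexOrder

namespace Matrix

theorem isStarProjection_mul_of_mul_mul_eq {m n α : Type*} [Fintype m] [Fintype n]
    [NonUnitalSemiring α] [Star α] {A : Matrix m n α} {B : Matrix n m α} (h : A * B * A = A)
    (hAB : (A * B)ᴴ = A * B) : IsStarProjection (A * B) :=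
  ⟨by rw [IsIdempotentElem, ← Matrix.mul_assoc, h], hAB⟩

variable {l m n 𝕜 : Type*} [RCLike 𝕜]

theorem submatrix_conjTranspose_mul_self [Fintype l] (A : Matrix l m 𝕜) (e : n → m) :
    (Aᴴ * A).submatrix e e = (A.submatrix id e)ᴴ * A.submatrix id e := by
  rw [submatrix_mul _ _ _ _ _ Function.bijective_id, conjTranspose_submatrix]

theorem mulVec_conjTranspose_injective [Fintype n] {B : Matrix n m 𝕜}
    (hB : Function.Injective B.vecMul) : Function.Injective Bᴴ.mulVec := by
  intro x y hxy
  have hstar := congrArg star hxy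
  rw [star_mulVec, star_mulVec, conjTranspose_conjTranspose] at hstar
  exact star_injective (hB hstar)

theorem IsStarProjection.posDef_submatrix [Fintype m] [Fintype n] {Q : Matrix m m 𝕜}
    {Ψ : Matrix m l 𝕜} (hQ : IsStarProjection Q) (hΨ : Q * Ψ = Ψ) {e : n → m}
    (hrows : LinearIndependent 𝕜 fun i => Ψ (e i)) :
    (Q.submatrix e e).PosDef := by
  have hQ' : Qᴴ = Q := hQ.isSelfAdjoint.star_eq
  have hgram : Q = Qᴴ * Q := by rw [hQ', hQ.isIdempotentElem.eq]
  have hcols : Ψᴴ * Q.submatrix id e = (Ψ.submatrix e id)ᴴ := by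
    have hΨQ : Ψᴴ * Q = Ψᴴ := by rw [← hQ', ← conjTranspose_mul, hΨ]
    rw [← submatrix_id_id Ψᴴ, ← submatrix_mul _ _ _ _ _ Function.bijective_id, hΨQ,
      conjTranspose_submatrix]
  have hinj : Function.Injective (Ψ.submatrix e id)ᴴ.mulVec :=
    mulVec_conjTranspose_injective (vecMul_injective_iff.mpr hrows)
  rw [hgram, submatrix_conjTranspose_mul_self]
  refine PosDef.conjTranspose_mul_self _ (Function.Injective.of_comp (f := Ψᴴ.mulVec) ?_)
  simpa only [Function.comp_def, mulVec_mulVec, hcols] using hinj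

end Matrix

theorem submatrix_mul_pseudoinverse_posDef_general
    {M N : ℕ} (Ψ : Matrix (Fin M) (Fin N) ℝ) (P : Matrix (Fin N) (Fin M) ℝ)
    (h1 : Ψ * P * Ψ = Ψ)
    (h3 : (Ψ * P)ᵀ = Ψ * P)
    (S : Finset (Fin M))
    (hrows : LinearIndependent ℝ (fun i : {i // i ∈ S} => Ψ (i : Fin M))) :
    ((Ψ * P).submatrix (fun i : {i // i ∈ S} => (i : Fin M))
      (fun j : {j // j ∈ S} => (j : Fin M))).PosDef := by
  have hsa : (Ψ * P)ᴴ = Ψ * P := by rwa [conjTranspose_eq_transpose_of_trivial]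
  exact (isStarProjection_mul_of_mul_mul_eq h1 hsa).posDef_submatrix h1 hrows

/-- If `P` is a Moore–Penrose pseudoinverse of `Ψ` and the rows of `Ψ` indexed by the
finite index set `S` are linearly independent, then the principal submatrix of `Ψ * P`
on `S` is positive definite. -/
theorem submatrix_mul_pseudoinverse_posDef
    {M N : ℕ} (Ψ : Matrix (Fin M) (Fin N) ℝ) (P : Matrix (Fin N) (Fin M) ℝ)
    (h1 : Ψ * P * Ψ = Ψ) (h2 : P * Ψ * P = P)
    (h3 : (Ψ * P)ᵀ = Ψ * P) (h4 : (P * Ψ)ᵀ = P * Ψ)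
    (S : Finset (Fin M))
    (hrows : LinearIndependent ℝ (fun i : {i // i ∈ S} => Ψ (i : Fin M))) :
    ((Ψ * P).submatrix (fun i : {i // i ∈ S} => (i : Fin M))
      (fun j : {j // j ∈ S} => (j : Fin M))).PosDef :=
  submatrix_mul_pseudoinverse_posDef_general Ψ P h1 h3 S hrows
end

section
/- Let Ψ ∈ ℝ^{M×N} be a matrix, P ∈ ℝ^{N×M} a Moore–Penrose pseudoinverse of Ψ, S ⊆ {1,…,M} a set of 'boundary' indices, and B ∈ ℝ^{M×M} the diagonal matrix with B_{ii} = 0 for i ∈ S and B_{ii} = 1 for i ∉ S. Let J_w ∈ ℝ^{M×N} be a matrix whose submatrix of rows indexed by S equals G·Ψ_S, where Ψ_S is the submatrix of Ψ consisting of the rows indexed by S and G is an invertible matrix of size |S|×|S|. If the rows of Ψ indexed by S are linearly independent, then the only vector φ ∈ ℝ^M satisfying both Bφ = 0 and (J_w P)φ = 0 is φ = 0; in other words, ker B ∩ ker(J_w P) = {0}. -/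
/-!
A vector `φ` with `Bφ = 0` is supported on the boundary rows, and `J_w P φ = 0` together with
the invertibility of `G` gives `(Ψ P φ)_S = 0`, so `φᵀ (Ψ P) φ = 0`. Since `Ψ P` is an orthogonal
projection it is positive semidefinite, hence `Ψ P φ = 0` and `φᵀ Ψ = φᵀ (Ψ P) Ψ = 0`. This is a
vanishing combination of the boundary rows of `Ψ`, so `φ = 0`.
-/

open Matrix

namespace Matrix

variable {m n R : Type*} [Fintype m]

theorem isStarProjection_mul_of_mul_mul_eq_self [Fintype n] [Semiring R] [StarRing R]
    {A : Matrix m n R} {B : Matrix n m R} (h : A * B * A = A) (hs : IsSelfAdjoint (A * B)) :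
    IsStarProjection (A * B) :=
  ⟨by rw [IsIdempotentElem, ← Matrix.mul_assoc, h], hs⟩

open scoped ComplexOrder MatrixOrder in
theorem mulVec_eq_zero_of_isStarProjection {𝕜 : Type*} [RCLike 𝕜] {Q : Matrix m m 𝕜}
    (hQ : IsStarProjection Q) {x : m → 𝕜} (hx : star x ⬝ᵥ Q *ᵥ x = 0) : Q *ᵥ x = 0 :=
  (hQ.nonneg.posSemidef.dotProduct_mulVec_zero_iff x).mp hx

theorem mulVec_diagonal_ite_mem_eq_zero_iff [DecidableEq m] [Semiring R] (S : Finset m)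
    (x : m → R) : diagonal (fun i => if i ∈ S then (0 : R) else 1) *ᵥ x = 0 ↔ ∀ i ∉ S, x i = 0 := by
  simp [funext_iff, mulVec_diagonal]

theorem dotProduct_eq_zero_of_forall_eq_zero_or [NonUnitalNonAssocSemiring R] {v w : m → R}
    (h : ∀ i, v i = 0 ∨ w i = 0) : v ⬝ᵥ w = 0 :=
  Finset.sum_eq_zero fun i _ => (h i).elim (fun hv => by simp [hv]) (fun hw => by simp [hw])

theorem vecMul_eq_zero_of_mul_mul_eq_self [CommSemiring R] [Fintype n] {A : Matrix m n R}
    {B : Matrix n m R} (h : A * B * A = A) (hs : (A * B)ᵀ = A * B) {x : m → R}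
    (hx : (A * B) *ᵥ x = 0) : x ᵥ* A = 0 := by
  rw [← h, ← vecMul_vecMul, ← mulVec_transpose (A * B), hs, hx, zero_vecMul]

theorem eq_zero_of_vecMul_eq_zero_of_linearIndependent [Ring R] {A : Matrix m n R} {S : Finset m}
    (hA : LinearIndependent R fun i : S => A i) {x : m → R} (hx : ∀ i ∉ S, x i = 0)
    (h : x ᵥ* A = 0) : x = 0 := by
  have hsum : ∑ i : S, x i • A i = 0 := by
    rw [Finset.sum_coe_sort S fun i => x i • A i,
      Finset.sum_subset (Finset.subset_univ S) fun i _ hi => by simp [hx i hi], ← vecMul_eq_sum, h]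
  funext i
  by_cases hi : i ∈ S
  · exact Fintype.linearIndependent_iff.mp hA _ hsum ⟨i, hi⟩
  · exact hx i hi

end Matrix

theorem kernel_inter_trivial_of_boundary_rows_linearIndependent_general
    {M N : ℕ} (Ψ : Matrix (Fin M) (Fin N) ℝ) (P : Matrix (Fin N) (Fin M) ℝ)
    (h1 : Ψ * P * Ψ = Ψ)
    (h3 : (Ψ * P)ᵀ = Ψ * P)
    (S : Finset (Fin M))
    (B : Matrix (Fin M) (Fin M) ℝ)
    (hB : B = Matrix.diagonal (fun i => if i ∈ S then (0 : ℝ) else 1))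
    (Jw : Matrix (Fin M) (Fin N) ℝ)
    (G : Matrix {i // i ∈ S} {i // i ∈ S} ℝ) (hG : IsUnit G)
    (hJw : Jw.submatrix (fun i : {i // i ∈ S} => (i : Fin M)) id =
      G * Ψ.submatrix (fun i : {i // i ∈ S} => (i : Fin M)) id)
    (hrows : LinearIndependent ℝ (fun i : {i // i ∈ S} => Ψ (i : Fin M)))
    (φ : Fin M → ℝ) (hBφ : B.mulVec φ = 0) (hJφ : (Jw * P).mulVec φ = 0) :
    φ = 0 := by
  have hsupp : ∀ i ∉ S, φ i = 0 := (mulVec_diagonal_ite_mem_eq_zero_iff S φ).mp (hB ▸ hBφ)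
  have hbdry : Ψ.submatrix (fun i : {i // i ∈ S} => (i : Fin M)) id *ᵥ (P *ᵥ φ) = 0 := by
    refine mulVec_injective_iff_isUnit.mpr hG ?_
    rw [mulVec_mulVec, ← hJw, mulVec_zero]
    have hJw0 : Jw *ᵥ (P *ᵥ φ) = 0 := by rwa [mulVec_mulVec]
    funext i
    exact congrFun hJw0 i
  have hquad : φ ⬝ᵥ (Ψ * P) *ᵥ φ = 0 := by
    refine dotProduct_eq_zero_of_forall_eq_zero_or fun i => ?_
    by_cases hi : i ∈ S
    · exact .inr (by rw [← mulVec_mulVec]; exact congrFun hbdry ⟨i, hi⟩)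
    · exact .inl (hsupp i hi)
  have hself : IsSelfAdjoint (Ψ * P) := (conjTranspose_eq_transpose_of_trivial _).trans h3
  have hΨP : (Ψ * P) *ᵥ φ = 0 := mulVec_eq_zero_of_isStarProjection
    (isStarProjection_mul_of_mul_mul_eq_self h1 hself) hquad
  exact eq_zero_of_vecMul_eq_zero_of_linearIndependent hrows hsupp
    (vecMul_eq_zero_of_mul_mul_eq_self h1 h3 hΨP)

/-- Deterministic core of the almost-sure regularity of the generalized pencil `(J_u, B)`:
if `P` is a Moore–Penrose pseudoinverse of the collocation matrix `Ψ`, `B` is the diagonal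
mass matrix vanishing exactly on the boundary index set `S`, the boundary rows of the
weight-space Jacobian `J_w` are `G * Ψ_S` with `G` invertible, and the boundary rows of `Ψ`
are linearly independent, then `ker B ∩ ker (J_w * P) = {0}`. -/
theorem kernel_inter_trivial_of_boundary_rows_linearIndependent
    {M N : ℕ} (Ψ : Matrix (Fin M) (Fin N) ℝ) (P : Matrix (Fin N) (Fin M) ℝ)
    (h1 : Ψ * P * Ψ = Ψ) (h2 : P * Ψ * P = P)
    (h3 : (Ψ * P)ᵀ = Ψ * P) (h4 : (P * Ψ)ᵀ = P * Ψ)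
    (S : Finset (Fin M))
    (B : Matrix (Fin M) (Fin M) ℝ)
    (hB : B = Matrix.diagonal (fun i => if i ∈ S then (0 : ℝ) else 1))
    (Jw : Matrix (Fin M) (Fin N) ℝ)
    (G : Matrix {i // i ∈ S} {i // i ∈ S} ℝ) (hG : IsUnit G)
    (hJw : Jw.submatrix (fun i : {i // i ∈ S} => (i : Fin M)) id =
      G * Ψ.submatrix (fun i : {i // i ∈ S} => (i : Fin M)) id)
    (hrows : LinearIndependent ℝ (fun i : {i // i ∈ S} => Ψ (i : Fin M)))
    (φ : Fin M → ℝ) (hBφ : B.mulVec φ = 0) (hJφ : (Jw * P).mulVec φ = 0) :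
    φ = 0 :=
  kernel_inter_trivial_of_boundary_rows_linearIndependent_general Ψ P h1 h3 S B hB Jw G hG hJw hrows
    φ hBφ hJφ
end
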